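/- arXiv:2005.06233 — 2 statements merged into one kernel-verified Lean document; each statement's English description precedes it below -/
import Mathlib

section
/- Let (Ω, F, P) be a complete probability space and f: Ω × ℝⁿ → ℝ a random function (f(·, x) measurable for each x) such that x ↦ f(ω, x) is twice continuously differentiable for each ω. If there exists some map ξ: Ω → ℝⁿ with g(ω, ξ(ω)) = 0 and H(ω, ξ(ω)) positive definite for all ω, then there exists a measurable ψ: Ω → ℝⁿ such that for every ω, ψ(ω) is a strict local minimizer of f(ω, ·): there is δ(ω) > 0 with f(ω, ψ(ω)) < f(ω, x) for all x ≠ ψ(ω) with ‖x − ψ(ω)‖ < δ(ω). -/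
/-!
At a critical point with positive definite Hessian the Hessian stays positive definite on a ball,
so `f ω` is strictly convex along each segment leaving the point inside that ball: the point is a
strict local minimizer.

For the measurable choice, fix a dense sequence `e` and consider the countably many balls centred
at some `e i` with rational radius. Call such a ball good for `f ω` if the infimum of `f ω` over
the dense points of the ball is already attained over the half ball and the near-minimizing dense
points of the ball have diameter tending to zero. Then `f ω` has a unique minimizer on the closed
ball, lying in the half ball, hence a strict local minimizer, and every near-minimizing sequence of
dense points converges to it. Conversely every strict local minimizer has a good ball around it.
Goodness is expressed through countably many of the measurable functions `ω ↦ f ω (e i)`, so the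
first good ball and the first near-minimizing dense points in it depend measurably on `ω`, and the
selection is their pointwise limit.
-/

open Filter Topology Metric Set

section SecondDerivativeTest

variable {E : Type*} [NormedAddCommGroup E] [NormedSpace ℝ E]

theorem eventually_forall_pos_of_continuous {X : Type*} [TopologicalSpace X] [ProperSpace E]
    {B : X → E →L[ℝ] E →L[ℝ] ℝ} (hB : Continuous B) {x₀ : X} (h : ∀ v ≠ 0, 0 < B x₀ v v) :
    ∀ᶠ x in 𝓝 x₀, ∀ v ≠ 0, 0 < B x v v := by
  have hsphere : ∀ᶠ x in 𝓝 x₀, ∀ u ∈ sphere (0 : E) 1, 0 < B x u u := by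
    refine (isCompact_sphere 0 1).eventually_forall_of_forall_eventually fun u hu => ?_
    have hcont : Continuous fun p : X × E => B p.1 p.2 p.2 := by fun_prop
    exact (hcont.tendsto (x₀, u)).eventually
      (lt_mem_nhds (h u (ne_zero_of_mem_sphere one_ne_zero ⟨u, hu⟩)))
  filter_upwards [hsphere] with x hx v hv
  have hv' : ‖v‖ ≠ 0 := norm_ne_zero_iff.2 hv
  have hunit := hx (‖v‖⁻¹ • v) (by simp [norm_smul, hv'])
  have hscale : B x v v = ‖v‖ ^ 2 * B x (‖v‖⁻¹ • v) (‖v‖⁻¹ • v) := by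
    simp only [map_smul, FunLike.coe_smul, Pi.smul_apply, smul_eq_mul]
    field_simp
  rw [hscale]
  positivity

theorem lt_of_deriv_eq_zero_of_deriv2_pos {φ φ' φ'' : ℝ → ℝ}
    (hφ : ∀ t, HasDerivAt φ (φ' t) t) (hφ' : ∀ t, HasDerivAt φ' (φ'' t) t)
    (h0 : φ' 0 = 0) (hpos : ∀ t ∈ Ioo (0 : ℝ) 1, 0 < φ'' t) : φ 0 < φ 1 := by
  obtain ⟨a, ha, hφa⟩ := exists_hasDerivAt_eq_slope φ φ' zero_lt_one
    (fun t _ => (hφ t).continuousAt.continuousWithinAt) fun t _ => hφ t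
  obtain ⟨b, hb, hφb⟩ := exists_hasDerivAt_eq_slope φ' φ'' ha.1
    (fun t _ => (hφ' t).continuousAt.continuousWithinAt) fun t _ => hφ' t
  have hφ'a : 0 < φ' a := by
    have := hpos b ⟨hb.1, hb.2.trans ha.2⟩
    rw [hφb, h0, sub_zero, sub_zero] at this
    exact (div_pos_iff_of_pos_right ha.1).1 this
  rw [hφa, sub_zero, div_one] at hφ'a
  linarith

theorem eventually_lt_of_fderiv_eq_zero_of_pos [FiniteDimensional ℝ E] {f : E → ℝ} {x₀ : E}
    (hf : ContDiff ℝ 2 f) (hDf : fderiv ℝ f x₀ = 0)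
    (hD2f : ∀ v ≠ 0, 0 < fderiv ℝ (fderiv ℝ f) x₀ v v) : ∀ᶠ x in 𝓝[≠] x₀, f x₀ < f x := by
  have hf' : ContDiff ℝ 1 (fderiv ℝ f) := hf.fderiv_right le_rfl
  obtain ⟨ε, hε, hpos⟩ := Metric.eventually_nhds_iff_ball.1
    (eventually_forall_pos_of_continuous (hf'.continuous_fderiv one_ne_zero) hD2f)
  rw [eventually_nhdsWithin_iff]
  filter_upwards [ball_mem_nhds x₀ hε] with x hx hne
  set h := x - x₀
  have hL : ∀ t : ℝ, HasDerivAt (fun t : ℝ => x₀ + t • h) h t := fun t => by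
    simpa using ((hasDerivAt_id t).smul_const h).const_add x₀
  have hL_mem : ∀ t ∈ Ioo (0 : ℝ) 1, x₀ + t • h ∈ ball x₀ ε := fun t ht =>
    (convex_ball x₀ ε).add_smul_sub_mem (mem_ball_self hε) hx (Ioo_subset_Icc_self ht)
  have key := lt_of_deriv_eq_zero_of_deriv2_pos
    (φ := fun t => f (x₀ + t • h)) (φ' := fun t => fderiv ℝ f (x₀ + t • h) h)
    (φ'' := fun t => fderiv ℝ (fderiv ℝ f) (x₀ + t • h) h h)
    (fun t => (hf.differentiable two_ne_zero _).hasFDerivAt.comp_hasDerivAt t (hL t))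
    (fun t => by
      have := (hf'.differentiable one_ne_zero _).hasFDerivAt.comp_hasDerivAt t (hL t)
      simpa using this.clm_apply (hasDerivAt_const t h))
    (by simp [hDf])
    (fun t ht => hpos _ (hL_mem t ht) h (sub_ne_zero.2 hne))
  simpa [h] using key

end SecondDerivativeTest

section MetricSpace

variable {X : Type*} [MetricSpace X]

theorem dist_le_of_mem_closure_of_forall_dist_le {s : Set X} {C : ℝ}
    (h : ∀ a ∈ s, ∀ b ∈ s, dist a b ≤ C) {a b : X} (ha : a ∈ closure s) (hb : b ∈ closure s) :
    dist a b ≤ C := by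
  have hab : (a, b) ∈ closure (s ×ˢ s) := by rw [closure_prod_eq]; exact ⟨ha, hb⟩
  exact closure_minimal (fun p hp => h _ hp.1 _ hp.2)
    (isClosed_le continuous_dist continuous_const) hab

theorem tendsto_of_forall_mem_closure_of_dist_le {S : ℕ → Set X} (hS : Antitone S)
    (hdiam : ∀ ε > 0, ∃ Q, ∀ a ∈ S Q, ∀ b ∈ S Q, dist a b ≤ ε) {z : X}
    (hz : ∀ q, z ∈ closure (S q)) {x : ℕ → X} (hx : ∀ q, x q ∈ closure (S q)) :
    Tendsto x atTop (𝓝 z) := by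
  refine Metric.tendsto_atTop.2 fun ε hε => ?_
  obtain ⟨Q, hQ⟩ := hdiam (ε / 2) (half_pos hε)
  refine ⟨Q, fun q hq => ?_⟩
  have hxQ : x q ∈ closure (S Q) := closure_mono (hS hq) (hx q)
  exact (dist_le_of_mem_closure_of_forall_dist_le hQ hxQ (hz Q)).trans_lt (half_lt_self hε)

theorem IsCompact.exists_pos_forall_dist_lt_of_lt_add {K : Set X} (hK : IsCompact K)
    {F : X → ℝ} (hF : ContinuousOn F K) {x₀ : X} (hmin : ∀ y ∈ K, y ≠ x₀ → F x₀ < F y)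
    {ε : ℝ} (hε : 0 < ε) : ∃ δ > 0, ∀ y ∈ K, F y < F x₀ + δ → dist y x₀ < ε := by
  obtain ⟨a, hx₀a, ha⟩ := (hK.diff isOpen_ball).exists_forall_le' (hF.mono sdiff_subset)
    fun y hy => hmin y hy.1 fun h => hy.2 (by rw [h]; exact mem_ball_self hε)
  refine ⟨a - F x₀, sub_pos.2 hx₀a, fun y hy hFy => ?_⟩
  by_contra hfar
  linarith [ha y ⟨hy, hfar⟩]

end MetricSpace

section DenseInf

variable {X : Type*} (e : ℕ → X) (F : X → ℝ)

/-- Countable stand-in for the infimum of `F` over `U`, so that it is measurable in a parameter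
of `F`. -/
noncomputable def denseInf (U : Set X) : ℝ :=
  ⨅ i : {i // e i ∈ U}, F (e i)

def nearMinIdx (U : Set X) (q : ℕ) : Set ℕ :=
  {i | e i ∈ U ∧ F (e i) < denseInf e F U + 1 / (q + 1)}

variable {e F}

theorem nearMinIdx_antitone (U : Set X) : Antitone (nearMinIdx e F U) :=
  fun _ _ hqq' _ hi => ⟨hi.1, hi.2.trans_le (by gcongr)⟩

variable {Ω : Type*} [MeasurableSpace Ω] {f : Ω → X → ℝ}

theorem measurable_denseInf (hfm : ∀ x, Measurable fun ω => f ω x) (U : Set X) :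
    Measurable fun ω => denseInf e (f ω) U :=
  Measurable.iInf fun _ => hfm _

theorem measurable_mem_nearMinIdx (hfm : ∀ x, Measurable fun ω => f ω x) (U : Set X)
    (q i : ℕ) : Measurable fun ω => i ∈ nearMinIdx e (f ω) U q :=
  measurable_const.and (measurableSet_setOfPred.1
    (measurableSet_lt (hfm _) ((measurable_denseInf hfm U).add_const _)))

end DenseInf

section DenseInfTopology

variable {X : Type*} [TopologicalSpace X] {e : ℕ → X} {F : X → ℝ} {U : Set X}

theorem isLeast_denseInf (he : DenseRange e) (hF : Continuous F) (hU : IsOpen U)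
    (hne : U.Nonempty) (hK : IsCompact (closure U)) :
    IsLeast (F '' closure U) (denseInf e F U) := by
  obtain ⟨z, hz, hzmin⟩ := hK.exists_isMinOn (hne.mono subset_closure) hF.continuousOn
  obtain ⟨i₀, hi₀⟩ := he.exists_mem_open hU hne
  have : Nonempty {i // e i ∈ U} := ⟨⟨i₀, hi₀⟩⟩
  have hglb : IsGLB (range fun i : {i // e i ∈ U} => F (e i)) (F z) := by
    refine ⟨?_, fun b hb => le_of_not_gt fun hzb => ?_⟩
    · rintro _ ⟨i, rfl⟩
      exact hzmin (subset_closure i.2)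
    · obtain ⟨y, hyb, hyU⟩ := mem_closure_iff.1 hz _ (isOpen_Iio.preimage hF) hzb
      obtain ⟨i, hiU, hib⟩ :=
        he.exists_mem_open (hU.inter (isOpen_Iio.preimage hF)) ⟨y, hyU, hyb⟩
      exact (hb ⟨⟨i, hiU⟩, rfl⟩).not_gt hib
  have hinf : denseInf e F U = F z := hglb.ciInf_eq
  refine ⟨⟨z, hz, hinf.symm⟩, ?_⟩
  rintro _ ⟨x, hx, rfl⟩
  exact hinf ▸ hzmin hx

theorem denseInf_eq_of_forall_le (he : DenseRange e) (hF : Continuous F) (hU : IsOpen U)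
    (hK : IsCompact (closure U)) {x₀ : X} (hx₀ : x₀ ∈ U) (hmin : ∀ x ∈ closure U, F x₀ ≤ F x) :
    denseInf e F U = F x₀ :=
  (isLeast_denseInf he hF hU ⟨x₀, hx₀⟩ hK).unique
    ⟨mem_image_of_mem F (subset_closure hx₀), by rintro _ ⟨x, hx, rfl⟩; exact hmin x hx⟩

theorem nearMinIdx_nonempty (he : DenseRange e) (hU : IsOpen U) (hne : U.Nonempty) (q : ℕ) :
    (nearMinIdx e F U q).Nonempty := by
  obtain ⟨i₀, hi₀⟩ := he.exists_mem_open hU hne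
  have : Nonempty {i // e i ∈ U} := ⟨⟨i₀, hi₀⟩⟩
  obtain ⟨⟨i, hi⟩, hiF⟩ := exists_lt_of_ciInf_lt
    (lt_add_of_pos_right (denseInf e F U) (Nat.one_div_pos_of_nat (n := q)))
  exact ⟨i, hi, hiF⟩

theorem mem_closure_image_nearMinIdx (he : DenseRange e) (hF : Continuous F) (hU : IsOpen U)
    {y : X} (hy : y ∈ closure U) {q : ℕ} (hFy : F y < denseInf e F U + 1 / (q + 1)) :
    y ∈ closure (e '' nearMinIdx e F U q) := by
  refine mem_closure_iff.2 fun V hV hyV => ?_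
  have hW : IsOpen (V ∩ F ⁻¹' Iio (denseInf e F U + 1 / (q + 1))) :=
    hV.inter (isOpen_Iio.preimage hF)
  obtain ⟨x, hxW, hxU⟩ := mem_closure_iff.1 hy _ hW ⟨hyV, hFy⟩
  obtain ⟨i, ⟨hiV, hiF⟩, hiU⟩ := he.exists_mem_open (hW.inter hU) ⟨x, hxW, hxU⟩
  exact ⟨e i, hiV, i, ⟨hiU, hiF⟩, rfl⟩

end DenseInfTopology

section GoodBall

variable {X : Type*} [MetricSpace X] {e : ℕ → X} {F : X → ℝ}

variable (e F) in
/-- A countable test for `F` having a unique minimizer on the closed ball, located in the half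
ball. -/
def IsGoodBall (c : X) (r : ℝ) : Prop :=
  0 < r ∧ denseInf e F (ball c (r / 2)) = denseInf e F (ball c r) ∧
    ∀ j : ℕ, ∃ q : ℕ, ∀ i ∈ nearMinIdx e F (ball c r) q, ∀ i' ∈ nearMinIdx e F (ball c r) q,
      dist (e i) (e i') ≤ 1 / (j + 1)

theorem IsGoodBall.exists_strictLocalMin [ProperSpace X] (he : DenseRange e) (hF : Continuous F)
    {c : X} {r : ℝ} (hgood : IsGoodBall e F c r) :
    ∃ z, (∀ᶠ x in 𝓝[≠] z, F z < F x) ∧ ∀ w : ℕ → ℕ, (∀ q, w q ∈ nearMinIdx e F (ball c r) q) →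
      Tendsto (fun q => e (w q)) atTop (𝓝 z) := by
  obtain ⟨hr, hhalf, hconc⟩ := hgood
  set m := denseInf e F (ball c r)
  set S := fun q => e '' nearMinIdx e F (ball c r) q
  have hK : ∀ r', IsCompact (closure (ball c r')) := fun r' => isBounded_ball.isCompact_closure
  have hleast := isLeast_denseInf he hF isOpen_ball (nonempty_ball.2 hr) (hK r)
  obtain ⟨z, hz, hFz⟩ :=
    (isLeast_denseInf he hF isOpen_ball (nonempty_ball.2 (half_pos hr)) (hK (r / 2))).1
  rw [hhalf] at hFz
  have hzc : z ∈ ball c r :=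
    (mem_closedBall.1 (closure_ball_subset_closedBall hz)).trans_lt (half_lt_self hr)
  have hmem : ∀ y ∈ closure (ball c r), F y = m → ∀ q, y ∈ closure (S q) := fun y hy hFy q =>
    mem_closure_image_nearMinIdx he hF isOpen_ball hy
      (hFy ▸ lt_add_of_pos_right _ Nat.one_div_pos_of_nat)
  have hdiam : ∀ ε > 0, ∃ Q, ∀ a ∈ S Q, ∀ b ∈ S Q, dist a b ≤ ε := fun ε hε => by
    obtain ⟨j, hj⟩ := exists_nat_one_div_lt hε
    obtain ⟨Q, hQ⟩ := hconc j
    refine ⟨Q, ?_⟩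
    rintro _ ⟨i, hi, rfl⟩ _ ⟨i', hi', rfl⟩
    exact (hQ i hi i' hi').trans hj.le
  have hconv : ∀ x : ℕ → X, (∀ q, x q ∈ closure (S q)) → Tendsto x atTop (𝓝 z) := fun x hx =>
    tendsto_of_forall_mem_closure_of_dist_le (fun _ _ h => image_mono (nearMinIdx_antitone _ h))
      hdiam (hmem z (subset_closure hzc) hFz) hx
  refine ⟨z, ?_, fun w hw => hconv _ fun q => subset_closure (mem_image_of_mem e (hw q))⟩
  rw [eventually_nhdsWithin_iff]
  filter_upwards [isOpen_ball.mem_nhds hzc] with x hx hxz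
  refine lt_of_le_of_ne (hFz ▸ hleast.2 (mem_image_of_mem F (subset_closure hx))) fun hFx => hxz ?_
  -- a second minimizer `x` is the limit of the constant sequence at `x`
  exact tendsto_nhds_unique tendsto_const_nhds
    (hconv _ fun q => hmem x (subset_closure hx) (hFx.symm.trans hFz) q)

theorem exists_isGoodBall [ProperSpace X] (he : DenseRange e) (hF : Continuous F) {x₀ : X}
    (hx₀ : ∀ᶠ x in 𝓝[≠] x₀, F x₀ < F x) : ∃ (i : ℕ) (s : ℚ), IsGoodBall e F (e i) s := by
  obtain ⟨ρ, hρ, hmin⟩ := Metric.eventually_nhds_iff_ball.1 (eventually_nhdsWithin_iff.1 hx₀)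
  obtain ⟨s, hs₁, hs₂⟩ := exists_rat_btwn (show ρ / 4 < ρ / 2 by linarith)
  obtain ⟨i, hi⟩ := he.exists_mem_open isOpen_ball ⟨x₀, mem_ball_self (by positivity : 0 < ρ / 8)⟩
  have hi' := mem_ball.1 hi
  have hK : ∀ r', IsCompact (closure (ball (e i) r')) := fun r' => isBounded_ball.isCompact_closure
  have hsub : ∀ r' ≤ (s : ℝ), closure (ball (e i) r') ⊆ ball x₀ ρ := fun r' hr' y hy => by
    have := mem_closedBall.1 (closure_ball_subset_closedBall hy)
    rw [mem_ball]
    linarith [dist_triangle y (e i) x₀]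
  have hle : ∀ y ∈ ball x₀ ρ, F x₀ ≤ F y := fun y hy => by
    rcases eq_or_ne y x₀ with rfl | hne
    exacts [le_rfl, (hmin y hy hne).le]
  have hinf : ∀ r', (s : ℝ) / 2 ≤ r' → r' ≤ s → denseInf e F (ball (e i) r') = F x₀ :=
    fun r' h₁ h₂ => denseInf_eq_of_forall_le he hF isOpen_ball (hK r')
      (by rw [mem_ball, dist_comm]; linarith) fun x hx => hle x (hsub r' h₂ hx)
  refine ⟨i, s, by linarith, (hinf _ le_rfl (by linarith)).trans (hinf _ (by linarith) le_rfl).symm,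
    fun j => ?_⟩
  obtain ⟨δ, hδ, hnear⟩ := (hK s).exists_pos_forall_dist_lt_of_lt_add hF.continuousOn
    (fun y hy hne => hmin y (hsub s le_rfl hy) hne) (half_pos (Nat.one_div_pos_of_nat (n := j)))
  obtain ⟨q, hq⟩ := exists_nat_one_div_lt hδ
  have hclose : ∀ k ∈ nearMinIdx e F (ball (e i) s) q, dist (e k) x₀ < 1 / (j + 1) / 2 :=
    fun k hk => hnear _ (subset_closure hk.1) (by
      have := hk.2
      rw [hinf s (by linarith) le_rfl] at this
      linarith)
  refine ⟨q, fun k hk k' hk' => ?_⟩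
  linarith [dist_triangle_right (e k) (e k') x₀, hclose k hk, hclose k' hk']

theorem measurable_isGoodBall {Ω : Type*} [MeasurableSpace Ω] {f : Ω → X → ℝ}
    (hfm : ∀ x, Measurable fun ω => f ω x) (c : X) (r : ℝ) :
    Measurable fun ω => IsGoodBall e (f ω) c r :=
  measurable_const.and <|
    (measurableSet_setOfPred.1 (measurableSet_eq_fun (measurable_denseInf hfm _)
      (measurable_denseInf hfm _))).and <|
    .forall fun _ => .exists fun _ => .forall fun _ => (measurable_mem_nearMinIdx hfm _ _ _).imp <|
      .forall fun _ => (measurable_mem_nearMinIdx hfm _ _ _).imp measurable_const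

end GoodBall

theorem exists_measurable_strictLocalMin {Ω X : Type*} [MeasurableSpace Ω] [MetricSpace X]
    [ProperSpace X] [MeasurableSpace X] [BorelSpace X] [Nonempty X] {f : Ω → X → ℝ}
    (hfm : ∀ x, Measurable fun ω => f ω x) (hfc : ∀ ω, Continuous (f ω))
    (hmin : ∀ ω, ∃ x₀, ∀ᶠ x in 𝓝[≠] x₀, f ω x₀ < f ω x) :
    ∃ ψ : Ω → X, Measurable ψ ∧ ∀ ω, ∀ᶠ x in 𝓝[≠] ψ ω, f ω (ψ ω) < f ω x := by
  classical
  set e := TopologicalSpace.denseSeq X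
  have he : DenseRange e := TopologicalSpace.denseRange_denseSeq X
  obtain ⟨b, hb⟩ := exists_surjective_nat (ℕ × ℚ)
  let center : ℕ → X := fun k => e (b k).1
  let radius : ℕ → ℝ := fun k => (b k).2
  have hgood : ∀ ω, ∃ k, IsGoodBall e (f ω) (center k) (radius k) := fun ω => by
    obtain ⟨x₀, hx₀⟩ := hmin ω
    obtain ⟨i, s, h⟩ := exists_isGoodBall he (hfc ω) hx₀
    obtain ⟨k, hk⟩ := hb (i, s)
    exact ⟨k, by simpa only [center, radius, hk] using h⟩
  let K : Ω → ℕ := fun ω => Nat.find (hgood ω)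
  have hK : Measurable K := measurable_find _ fun k => (measurable_isGoodBall hfm _ _).setOf
  have hKgood : ∀ ω, IsGoodBall e (f ω) (center (K ω)) (radius (K ω)) :=
    fun ω => Nat.find_spec (hgood ω)
  have hne : ∀ ω q, ∃ i, i ∈ nearMinIdx e (f ω) (ball (center (K ω)) (radius (K ω))) q :=
    fun ω => nearMinIdx_nonempty he isOpen_ball (nonempty_ball.2 (hKgood ω).1)
  have hι : ∀ q, Measurable fun ω => Nat.find (hne ω q) := fun q => measurable_find _ fun i => by
    have : Measurable fun p : Ω × ℕ =>
        i ∈ nearMinIdx e (f p.1) (ball (center p.2) (radius p.2)) q :=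
      measurable_from_prod_countable_left fun k =>
        measurable_mem_nearMinIdx hfm (ball (center k) (radius k)) q i
    exact (this.comp (measurable_id.prodMk hK)).setOf
  choose ψ hψmin hψlim using fun ω => (hKgood ω).exists_strictLocalMin he (hfc ω)
  exact ⟨ψ, measurable_of_tendsto_metrizable (fun q => measurable_from_top.comp (hι q))
    (tendsto_pi_nhds.2 fun ω => hψlim ω _ fun q => Nat.find_spec (hne ω q)), hψmin⟩

open MeasureTheory

theorem stmt_11_general {Ω : Type*} {n : ℕ} [MeasurableSpace Ω]
    (f : Ω → EuclideanSpace ℝ (Fin n) → ℝ)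
    (hfm : ∀ x, Measurable fun ω => f ω x)
    (hfc : ∀ ω, ContDiff ℝ 2 (f ω))
    (ξ : Ω → EuclideanSpace ℝ (Fin n))
    (hξ : ∀ ω, gradient (f ω) (ξ ω) = 0 ∧
      ∀ v : EuclideanSpace ℝ (Fin n), v ≠ 0 → 0 < iteratedFDeriv ℝ 2 (f ω) (ξ ω) ![v, v]) :
    ∃ ψ : Ω → EuclideanSpace ℝ (Fin n), Measurable ψ ∧
      ∀ ω, ∃ δ > 0, ∀ x, x ≠ ψ ω → ‖x - ψ ω‖ < δ → f ω (ψ ω) < f ω x := by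
  have hcrit : ∀ ω, fderiv ℝ (f ω) (ξ ω) = 0 := fun ω => by
    rw [← toDual_gradient, (hξ ω).1, map_zero]
  have hHess : ∀ ω, ∀ v ≠ 0, 0 < fderiv ℝ (fderiv ℝ (f ω)) (ξ ω) v v := fun ω v hv => by
    simpa [iteratedFDeriv_two_apply] using (hξ ω).2 v hv
  obtain ⟨ψ, hψm, hψ⟩ := exists_measurable_strictLocalMin hfm (fun ω => (hfc ω).continuous)
    fun ω => ⟨ξ ω, eventually_lt_of_fderiv_eq_zero_of_pos (hfc ω) (hcrit ω) (hHess ω)⟩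
  refine ⟨ψ, hψm, fun ω => ?_⟩
  obtain ⟨δ, hδ, hψδ⟩ := Metric.eventually_nhds_iff.1 (eventually_nhdsWithin_iff.1 (hψ ω))
  exact ⟨δ, hδ, fun x hx hxδ => hψδ (by rwa [dist_eq_norm]) hx⟩

theorem stmt_11 {Ω : Type*} {n : ℕ} [MeasurableSpace Ω] (μ : Measure Ω)
    [IsProbabilityMeasure μ] [μ.IsComplete]
    (f : Ω → EuclideanSpace ℝ (Fin n) → ℝ)
    (hfm : ∀ x, Measurable fun ω => f ω x)
    (hfc : ∀ ω, ContDiff ℝ 2 (f ω))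
    (ξ : Ω → EuclideanSpace ℝ (Fin n))
    (hξ : ∀ ω, gradient (f ω) (ξ ω) = 0 ∧
      ∀ v : EuclideanSpace ℝ (Fin n), v ≠ 0 → 0 < iteratedFDeriv ℝ 2 (f ω) (ξ ω) ![v, v]) :
    ∃ ψ : Ω → EuclideanSpace ℝ (Fin n), Measurable ψ ∧
      ∀ ω, ∃ δ > 0, ∀ x, x ≠ ψ ω → ‖x - ψ ω‖ < δ → f ω (ψ ω) < f ω x :=
  stmt_11_general f hfm hfc ξ hξ
end

section
/- Let (Ω, F, P) be a complete probability space and f: Ω × ℝⁿ → ℝ a random function, twice continuously differentiable in x for each ω, such that the Hessian H(ω, x) is positive semi-definite for all (ω, x). If there exists a map ξ: Ω → ℝⁿ with g(ω, ξ(ω)) = 0 and H(ω, ξ(ω)) positive definite for all ω, then there exists a measurable ψ: Ω → ℝⁿ with f(ω, ψ(ω)) = inf_{x ∈ ℝⁿ} f(ω, x) for every ω ∈ Ω. -/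
open MeasureTheory Filter Set
open scoped Topology

/-!
Along a ray `t ↦ a + t • v` from a critical point `a`, the derivative `t ↦ Df(a + t • v) v`
has the Hessian form as its own derivative, so it is monotone and vanishes at `t = 0`: `f`
increases along every ray, and `a` is a global minimizer. Positive definiteness at `a` makes
the increase strict, so by compactness `f` stays a definite amount above `f a` on each sphere
around `a`, and, increasing along rays, also outside it: every minimizing sequence converges
to `a`.

For measurability, the minimal value is an infimum over a countable dense set, hence measurable
in `ω`; taking the first point of a dense sequence whose value is below `min + 1 / (k + 1)` gives
measurable near-minimizers, and these converge pointwise to the minimizer.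
-/

def TykhonovWellPosed {E : Type*} [TopologicalSpace E] (F : E → ℝ) (a : E) : Prop :=
  IsMinOn F univ a ∧ ∀ x : ℕ → E, Tendsto (F ∘ x) atTop (𝓝 (F a)) → Tendsto x atTop (𝓝 a)

lemma IsMinOn.ciInf_eq {E : Type*} {F : E → ℝ} {a : E} (h : IsMinOn F univ a) :
    ⨅ x, F x = F a :=
  have : Nonempty E := ⟨a⟩
  IsGLB.ciInf_eq (IsLeast.isGLB ⟨mem_range_self a, forall_mem_range.2 (isMinOn_univ_iff.1 h)⟩)

section LineRestriction

variable {E : Type*} [NormedAddCommGroup E] [NormedSpace ℝ E] {F : E → ℝ}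

lemma hasDerivAt_line (a v : E) (t : ℝ) : HasDerivAt (fun s : ℝ => a + s • v) v t := by
  simpa using ((hasDerivAt_id t).smul_const v).const_add a

lemma hasDerivAt_comp_line (hF : ContDiff ℝ 2 F) (a v : E) (t : ℝ) :
    HasDerivAt (fun s : ℝ => F (a + s • v)) (fderiv ℝ F (a + t • v) v) t :=
  (hF.differentiable (by norm_num) _).hasFDerivAt.comp_hasDerivAt t (hasDerivAt_line a v t)

lemma hasDerivAt_fderiv_comp_line (hF : ContDiff ℝ 2 F) (a v : E) (t : ℝ) :
    HasDerivAt (fun s : ℝ => fderiv ℝ F (a + s • v) v)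
      (iteratedFDeriv ℝ 2 F (a + t • v) ![v, v]) t := by
  have hF' : HasFDerivAt (fderiv ℝ F) (fderiv ℝ (fderiv ℝ F) (a + t • v)) (a + t • v) :=
    ((hF.fderiv_right (m := 1) (by norm_num)).differentiable (by norm_num) _).hasFDerivAt
  have hcomp : HasDerivAt (fun s : ℝ => fderiv ℝ F (a + s • v))
      (fderiv ℝ (fderiv ℝ F) (a + t • v) v) t :=
    hF'.comp_hasDerivAt t (hasDerivAt_line a v t)
  simpa [iteratedFDeriv_two_apply] using hcomp.clm_apply (hasDerivAt_const t v)

end LineRestriction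

section PositiveSemidefiniteHessian

variable {E : Type*} [NormedAddCommGroup E] [NormedSpace ℝ E] {F : E → ℝ}
  (hF : ContDiff ℝ 2 F) (hpsd : ∀ x v : E, 0 ≤ iteratedFDeriv ℝ 2 F x ![v, v])
include hF hpsd

lemma monotone_fderiv_comp_line (a v : E) : Monotone fun t : ℝ => fderiv ℝ F (a + t • v) v :=
  monotone_of_hasDerivAt_nonneg (hasDerivAt_fderiv_comp_line hF a v) fun _ => hpsd _ v

variable {a : E} (ha : fderiv ℝ F a = 0)
include ha

lemma monotoneOn_comp_line (v : E) : MonotoneOn (fun t : ℝ => F (a + t • v)) (Ici 0) := by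
  refine monotoneOn_of_hasDerivWithinAt_nonneg (convex_Ici 0)
    (fun t _ => (hasDerivAt_comp_line hF a v t).continuousAt.continuousWithinAt)
    (fun t _ => (hasDerivAt_comp_line hF a v t).hasDerivWithinAt) fun t ht => ?_
  rw [interior_Ici] at ht
  simpa [ha] using monotone_fderiv_comp_line hF hpsd a v (le_of_lt ht)

lemma isMinOn_univ_of_fderiv_eq_zero : IsMinOn F univ a := fun x _ => by
  simpa using
    monotoneOn_comp_line hF hpsd ha (x - a) self_mem_Ici (mem_Ici.2 zero_le_one) zero_le_one

lemma exists_mem_sphere_apply_le {ε : ℝ} (hε : 0 < ε) {x : E} (hx : ε ≤ dist x a) :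
    ∃ p ∈ Metric.sphere a ε, F p ≤ F x := by
  have hd : 0 < dist x a := hε.trans_le hx
  set s := ε / dist x a
  have hs : 0 < s := div_pos hε hd
  refine ⟨a + s • (x - a), ?_, ?_⟩
  · rw [Metric.mem_sphere, dist_eq_norm, add_sub_cancel_left, norm_smul, Real.norm_of_nonneg hs.le,
      ← dist_eq_norm]
    exact div_mul_cancel₀ ε hd.ne'
  · simpa using monotoneOn_comp_line hF hpsd ha (x - a) hs.le (mem_Ici.2 zero_le_one)
      ((div_le_one hd).2 hx)

variable (hpd : ∀ v : E, v ≠ 0 → 0 < iteratedFDeriv ℝ 2 F a ![v, v])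
include hpd

lemma fderiv_comp_line_pos {v : E} (hv : v ≠ 0) {t : ℝ} (ht : 0 < t) :
    0 < fderiv ℝ F (a + t • v) v := by
  have hD := hasDerivAt_fderiv_comp_line hF a v 0
  have hsign := eventually_nhdsWithin_sign_eq_of_deriv_pos (x₀ := 0)
    (f := fun s : ℝ => fderiv ℝ F (a + s • v) v)
    (by simpa [hD.deriv] using hpd v hv) (by simp [ha])
  obtain ⟨s, hs, hst⟩ :=
    ((hsign.filter_mono nhdsWithin_le_nhds).and (Ioo_mem_nhdsGT ht)).exists
  have hpos : 0 < fderiv ℝ F (a + s • v) v := by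
    rwa [sub_zero, sign_pos hst.1, sign_eq_one_iff] at hs
  exact hpos.trans_le (monotone_fderiv_comp_line hF hpsd a v hst.2.le)

lemma strictMonoOn_comp_line {v : E} (hv : v ≠ 0) :
    StrictMonoOn (fun t : ℝ => F (a + t • v)) (Ici 0) := by
  refine strictMonoOn_of_hasDerivWithinAt_pos (convex_Ici 0)
    (fun t _ => (hasDerivAt_comp_line hF a v t).continuousAt.continuousWithinAt)
    (fun t _ => (hasDerivAt_comp_line hF a v t).hasDerivWithinAt) fun t ht => ?_
  rw [interior_Ici] at ht
  exact fderiv_comp_line_pos hF hpsd ha hpd hv ht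

lemma apply_lt_apply_of_ne {x : E} (hx : x ≠ a) : F a < F x := by
  simpa using strictMonoOn_comp_line hF hpsd ha hpd (sub_ne_zero.2 hx) self_mem_Ici
    (mem_Ici.2 zero_le_one) zero_lt_one

lemma exists_pos_forall_apply_lt_add_imp_dist_lt [ProperSpace E] {ε : ℝ} (hε : 0 < ε) :
    ∃ η > 0, ∀ x, F x < F a + η → dist x a < ε := by
  rcases (Metric.sphere a ε).eq_empty_or_nonempty with hempty | hne
  · refine ⟨1, one_pos, fun x _ => not_le.1 fun hx => ?_⟩
    obtain ⟨p, hp, -⟩ := exists_mem_sphere_apply_le hF hpsd ha hε hx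
    exact hempty.subset hp
  · obtain ⟨p₀, hp₀, hmin⟩ := (isCompact_sphere a ε).exists_isMinOn hne hF.continuous.continuousOn
    have hp₀a : p₀ ≠ a := Metric.ne_of_mem_sphere hp₀ hε.ne'
    refine ⟨F p₀ - F a, sub_pos.2 (apply_lt_apply_of_ne hF hpsd ha hpd hp₀a),
      fun x hx => not_le.1 fun hdist => ?_⟩
    obtain ⟨p, hp, hpx⟩ := exists_mem_sphere_apply_le hF hpsd ha hε hdist
    linarith [isMinOn_iff.1 hmin p hp]

theorem tykhonovWellPosed_of_fderiv_eq_zero [ProperSpace E] : TykhonovWellPosed F a := by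
  refine ⟨isMinOn_univ_of_fderiv_eq_zero hF hpsd ha, fun x hx => Metric.tendsto_nhds.2 ?_⟩
  intro ε hε
  obtain ⟨η, hη, hdist⟩ := exists_pos_forall_apply_lt_add_imp_dist_lt hF hpsd ha hpd hε
  filter_upwards [hx (Iio_mem_nhds (lt_add_of_pos_right _ hη))] with k hk using hdist _ hk

end PositiveSemidefiniteHessian

section MeasurableSelection

variable {Ω E : Type*} [MeasurableSpace Ω] [TopologicalSpace E]
  [TopologicalSpace.SeparableSpace E] {f : Ω → E → ℝ}
  (hfm : ∀ x, Measurable fun ω => f ω x) (hfc : ∀ ω, Continuous (f ω))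
include hfm hfc

lemma measurable_iInf_of_continuous : Measurable fun ω => ⨅ x, f ω x := by
  obtain ⟨S, hSc, hSd⟩ := TopologicalSpace.exists_countable_dense E
  have := hSc.to_subtype
  have hinf : (fun ω => ⨅ x, f ω x) = fun ω => ⨅ s : S, f ω s :=
    funext fun ω => (hSd.ciInf' (hfc ω)).symm
  rw [hinf]
  exact Measurable.iInf fun s => hfm s

lemma exists_measurable_apply_lt [Nonempty E] [MeasurableSpace E] {m : Ω → ℝ} (hm : Measurable m)
    (h : ∀ ω, ∃ x, f ω x < m ω) : ∃ ψ : Ω → E, Measurable ψ ∧ ∀ ω, f ω (ψ ω) < m ω := by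
  classical
  set u := TopologicalSpace.denseSeq E
  have hu : ∀ ω, ∃ j, f ω (u j) < m ω := fun ω =>
    (TopologicalSpace.denseRange_denseSeq E).exists_mem_open (isOpen_lt (hfc ω) continuous_const)
      (h ω)
  exact ⟨fun ω => u (Nat.find (hu ω)),
    measurable_from_top.comp (measurable_find hu fun j => measurableSet_lt (hfm _) hm),
    fun ω => Nat.find_spec (hu ω)⟩

theorem TykhonovWellPosed.measurable [Nonempty E] [MeasurableSpace E] [BorelSpace E]
    [TopologicalSpace.PseudoMetrizableSpace E] {ξ : Ω → E}
    (hξ : ∀ ω, TykhonovWellPosed (f ω) (ξ ω)) : Measurable ξ := by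
  have hmin : Measurable fun ω => f ω (ξ ω) := by
    simpa only [fun ω => (hξ ω).1.ciInf_eq] using measurable_iInf_of_continuous hfm hfc
  choose ψ hψm hψ using fun k : ℕ => exists_measurable_apply_lt hfm hfc
    (hmin.add_const (1 / (k + 1 : ℝ))) fun ω => ⟨ξ ω, lt_add_of_pos_right _ (by positivity)⟩
  refine measurable_of_tendsto_metrizable hψm (tendsto_pi_nhds.2 fun ω => (hξ ω).2 _ ?_)
  have hupper : Tendsto (fun k : ℕ => f ω (ξ ω) + 1 / (k + 1 : ℝ)) atTop (𝓝 (f ω (ξ ω))) := by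
    simpa using tendsto_one_div_add_atTop_nhds_zero_nat.const_add (f ω (ξ ω))
  exact tendsto_of_tendsto_of_tendsto_of_le_of_le tendsto_const_nhds hupper
    (fun k => isMinOn_univ_iff.1 (hξ ω).1 _) fun k => (hψ k ω).le

end MeasurableSelection

theorem stmt_13_general {Ω : Type*} {n : ℕ} [MeasurableSpace Ω]
    (f : Ω → EuclideanSpace ℝ (Fin n) → ℝ)
    (hfm : ∀ x, Measurable fun ω => f ω x)
    (hfc : ∀ ω, ContDiff ℝ 2 (f ω))
    (hpsd : ∀ ω, ∀ x v : EuclideanSpace ℝ (Fin n), 0 ≤ iteratedFDeriv ℝ 2 (f ω) x ![v, v])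
    (ξ : Ω → EuclideanSpace ℝ (Fin n))
    (hξ : ∀ ω, gradient (f ω) (ξ ω) = 0 ∧
      ∀ v : EuclideanSpace ℝ (Fin n), v ≠ 0 → 0 < iteratedFDeriv ℝ 2 (f ω) (ξ ω) ![v, v]) :
    ∃ ψ : Ω → EuclideanSpace ℝ (Fin n), Measurable ψ ∧
      ∀ ω, f ω (ψ ω) = ⨅ x : EuclideanSpace ℝ (Fin n), f ω x := by
  have hcrit : ∀ ω, fderiv ℝ (f ω) (ξ ω) = 0 := fun ω => by
    simpa [gradient] using (hξ ω).1
  have hwp : ∀ ω, TykhonovWellPosed (f ω) (ξ ω) := fun ω =>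
    tykhonovWellPosed_of_fderiv_eq_zero (hfc ω) (hpsd ω) (hcrit ω) (hξ ω).2
  exact ⟨ξ, TykhonovWellPosed.measurable hfm (fun ω => (hfc ω).continuous) hwp,
    fun ω => ((hwp ω).1.ciInf_eq).symm⟩

theorem stmt_13 {Ω : Type*} {n : ℕ} [MeasurableSpace Ω] (μ : Measure Ω)
    [IsProbabilityMeasure μ] [μ.IsComplete]
    (f : Ω → EuclideanSpace ℝ (Fin n) → ℝ)
    (hfm : ∀ x, Measurable fun ω => f ω x)
    (hfc : ∀ ω, ContDiff ℝ 2 (f ω))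
    (hpsd : ∀ ω, ∀ x v : EuclideanSpace ℝ (Fin n), 0 ≤ iteratedFDeriv ℝ 2 (f ω) x ![v, v])
    (ξ : Ω → EuclideanSpace ℝ (Fin n))
    (hξ : ∀ ω, gradient (f ω) (ξ ω) = 0 ∧
      ∀ v : EuclideanSpace ℝ (Fin n), v ≠ 0 → 0 < iteratedFDeriv ℝ 2 (f ω) (ξ ω) ![v, v]) :
    ∃ ψ : Ω → EuclideanSpace ℝ (Fin n), Measurable ψ ∧
      ∀ ω, f ω (ψ ω) = ⨅ x : EuclideanSpace ℝ (Fin n), f ω x :=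
  stmt_13_general f hfm hfc hpsd ξ hξ
end
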